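/- Let π : G → H be a homomorphism of abelian groups, let X₁, X₂ be random variables taking values in finite subsets of G, and set Y₁ := π(X₁), Y₂ := π(X₂). Then d_ent(X₁, X₂) ≥ d_ent(Y₁, Y₂) + Σ_{y₁, y₂ ∈ H} p_{Y₁}(y₁) p_{Y₂}(y₂) d_ent((X₁ | Y₁ = y₁), (X₂ | Y₂ = y₂)), where the sum ranges over pairs (y₁, y₂) with p_{Y₁}(y₁), p_{Y₂}(y₂) > 0. In particular d_ent(X₁, X₂) ≥ d_ent(Y₁, Y₂), and σ_ent[π(X)] ≤ σ_ent[X] for any random variable X taking values in a finite subset of G. -/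

import Mathlib

/-!
For independent `X₁, X₂` put `Z = X₁ - X₂`. The chain rule gives `H(Z) = H(π Z) + H(Z | π Z)`, and
since `π Z = π X₁ - π X₂` is a function of `(π X₁, π X₂)`, conditioning on that finer pair can only
lower the entropy: `H(Z | π Z) ≥ H(Z | π X₁, π X₂) = Σ p(y₁) p(y₂) H((X₁ | y₁) - (X₂ | y₂))`.
This monotonicity is concavity of entropy, the law of `Z` given `π Z = t` being the mixture of
its laws given `(π X₁, π X₂) = (y₁, y₂)` over `y₁ - y₂ = t`. Subtracting halves of the chain
rules for `X₁` and `X₂` gives the first inequality, and the second follows from `d_ent ≥ 0`.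
The same argument for `X₁ + X₂`, with `H((X | y₁) + (X | y₂)) ≥ H(X | y₁)`, bounds the doubling.
-/

open Finset

noncomputable section

/-- `IsPMF p`: the finitely supported function `p` is a probability mass function,
modelling the distribution of a random variable taking values in a finite subset. -/
def IsPMF {G : Type*} (p : G →₀ ℝ) : Prop :=
  (∀ x, 0 ≤ p x) ∧ ∑ x ∈ p.support, p x = 1

/-- Shannon entropy `H(X)` of a random variable with distribution `p`. -/
def ent {G : Type*} (p : G →₀ ℝ) : ℝ :=
  ∑ x ∈ p.support, Real.negMulLog (p x)

/-- The joint distribution of a pair of independent random variables with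
distributions `p` and `q`. -/
def prodPMF {G H : Type*} (p : G →₀ ℝ) (q : H →₀ ℝ) : (G × H) →₀ ℝ :=
  Finsupp.onFinset (p.support ×ˢ q.support) (fun z => p z.1 * q z.2)
    (fun _z hz => Finset.mem_product.2
      ⟨Finsupp.mem_support_iff.2 (left_ne_zero_of_mul hz),
       Finsupp.mem_support_iff.2 (right_ne_zero_of_mul hz)⟩)

/-- The distribution of `X - Y`, where `X, Y` are independent with distributions `p, q`. -/
def subDist {G : Type*} [AddCommGroup G] (p q : G →₀ ℝ) : G →₀ ℝ :=
  Finsupp.mapDomain (fun z : G × G => z.1 - z.2) (prodPMF p q)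

/-- The distribution of `X + Y`, where `X, Y` are independent with distributions `p, q`. -/
def sumDist {G : Type*} [AddCommGroup G] (p q : G →₀ ℝ) : G →₀ ℝ :=
  Finsupp.mapDomain (fun z : G × G => z.1 + z.2) (prodPMF p q)

/-- The entropic Ruzsa distance `d_ent(X, Y) = H(X' - Y') - H(X)/2 - H(Y)/2`,
where `X', Y'` are independent copies of `X ~ p`, `Y ~ q`. -/
def dEnt {G : Type*} [AddCommGroup G] (p q : G →₀ ℝ) : ℝ :=
  ent (subDist p q) - ent p / 2 - ent q / 2

/-- The entropic doubling constant `σ_ent[X] = exp(H(X₁ + X₂) - H(X))`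
for independent copies `X₁, X₂` of `X ~ p`. -/
def sigmaEnt {G : Type*} [AddCommGroup G] (p : G →₀ ℝ) : ℝ :=
  Real.exp (ent (sumDist p p) - ent p)

/-- First marginal of a joint distribution on `G × H`. -/
def fstMarg {G H : Type*} (w : (G × H) →₀ ℝ) : G →₀ ℝ :=
  Finsupp.mapDomain Prod.fst w

/-- Second marginal of a joint distribution on `G × H`. -/
def sndMarg {G H : Type*} (w : (G × H) →₀ ℝ) : H →₀ ℝ :=
  Finsupp.mapDomain Prod.snd w

/-- The maximal entropic Ruzsa distance `d*_ent(X, Y)`: the supremum of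
`H(X' - Y') - H(X)/2 - H(Y)/2` over all couplings `(X', Y')` of `X ~ p` and `Y ~ q`. -/
def dEntStar {G : Type*} [AddCommGroup G] (p q : G →₀ ℝ) : ℝ :=
  sSup { d : ℝ | ∃ w : (G × G) →₀ ℝ, IsPMF w ∧ fstMarg w = p ∧ sndMarg w = q ∧
    d = ent (Finsupp.mapDomain (fun z : G × G => z.1 - z.2) w) - ent p / 2 - ent q / 2 }

/-- The uniform distribution on a finite set `A`. -/
def unif {G : Type*} [DecidableEq G] (A : Finset G) : G →₀ ℝ :=
  Finsupp.onFinset A (fun x => if x ∈ A then ((A.card : ℝ))⁻¹ else 0)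
    (fun x hx => by by_contra h; exact hx (if_neg h))

/-- The distribution of `X` conditioned on the event `π(X) = y`, where `X ~ p`. -/
def condFiber {G H : Type*} [DecidableEq H] (π : G → H) (y : H) (p : G →₀ ℝ) : G →₀ ℝ :=
  Finsupp.onFinset p.support
    (fun x => if π x = y then p x / (Finsupp.mapDomain π p) y else 0)
    (fun x hx => Finsupp.mem_support_iff.2 (fun h0 => hx (by (try simp only []); split_ifs <;> simp [h0])))

/-- The entropy `h(p)` of the Bernoulli distribution with parameter `p`. -/
def binEnt (p : ℝ) : ℝ := Real.negMulLog p + Real.negMulLog (1 - p)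

/-- Skew-dimension bound: `skewDimLE A r` means the skew-dimension of `A ⊆ ℤ^D`
is at most `r`. -/
def skewDimLE {D : ℕ} : Finset (Fin D → ℤ) → ℕ → Prop
  | A, 0 => A.card ≤ 1
  | A, r + 1 => A.card ≤ 1 ∨ ∃ i : Fin D, ∀ n : ℤ,
      skewDimLE (A.filter fun v => v i = n) r

/-- The (affine) dimension of a finite subset `A ⊆ ℤ^D`: the dimension of the
real span of `A - A`. -/
def dimAff {D : ℕ} (A : Finset (Fin D → ℤ)) : ℕ :=
  Module.finrank ℝ (Submodule.span ℝ
    { x : Fin D → ℝ | ∃ a ∈ A, ∃ b ∈ A, x = fun i => ((a i : ℝ) - (b i : ℝ)) })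

section Basics

variable {α β : Type*}

lemma ent_eq_sum_of_support_subset {p : α →₀ ℝ} {s : Finset α} (hs : p.support ⊆ s) :
    ent p = ∑ x ∈ s, Real.negMulLog (p x) :=
  sum_subset hs fun x _ hx => by rw [Finsupp.notMem_support_iff.1 hx, Real.negMulLog_zero]

lemma mapDomain_apply_eq_sum_of_support_subset [DecidableEq β] (f : α → β) {p : α →₀ ℝ}
    {s : Finset α} (hs : p.support ⊆ s) (y : β) :
    Finsupp.mapDomain f p y = ∑ x ∈ s with f x = y, p x := by
  rw [sum_filter, ← sum_subset hs fun x _ hx => by simp [Finsupp.notMem_support_iff.1 hx]]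
  simp [Finsupp.mapDomain, Finsupp.sum, Finsupp.single_apply]

lemma mapDomain_apply_eq_sum [DecidableEq β] (f : α → β) (p : α →₀ ℝ) (y : β) :
    Finsupp.mapDomain f p y = ∑ x ∈ p.support with f x = y, p x :=
  mapDomain_apply_eq_sum_of_support_subset f subset_rfl y

lemma mapDomain_nonneg {f : α → β} {p : α →₀ ℝ} (hp : ∀ x, 0 ≤ p x) (y : β) :
    0 ≤ Finsupp.mapDomain f p y := by
  classical
  exact (mapDomain_apply_eq_sum f p y).symm ▸ sum_nonneg fun x _ => hp x

lemma mem_support_mapDomain_of_nonneg (f : α → β) {p : α →₀ ℝ} (hp : ∀ x, 0 ≤ p x) {x : α}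
    (hx : x ∈ p.support) : f x ∈ (Finsupp.mapDomain f p).support := by
  classical
  rw [Finsupp.mem_support_iff, mapDomain_apply_eq_sum]
  exact ((hp x).lt_of_ne' (Finsupp.mem_support_iff.1 hx) |>.trans_le <|
    single_le_sum (s := {x' ∈ p.support | f x' = f x}) (fun x _ => hp x)
      (mem_filter.2 ⟨hx, rfl⟩)).ne'

lemma sum_support_mapDomain (f : α → β) (p : α →₀ ℝ) :
    ∑ y ∈ (Finsupp.mapDomain f p).support, Finsupp.mapDomain f p y = ∑ x ∈ p.support, p x :=
  Finsupp.sum_mapDomain_index (h := fun _ v => v) (fun _ => rfl) (fun _ _ _ => rfl)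

lemma IsPMF.mapDomain {p : α →₀ ℝ} (hp : IsPMF p) (f : α → β) :
    IsPMF (Finsupp.mapDomain f p) :=
  ⟨mapDomain_nonneg hp.1, (sum_support_mapDomain f p).trans hp.2⟩

lemma ent_mapDomain_of_injective {f : α → β} (hf : Function.Injective f) (p : α →₀ ℝ) :
    ent (Finsupp.mapDomain f p) = ent p := by
  classical
  rw [ent, Finsupp.mapDomain_support_of_injective hf, sum_image fun _ _ _ _ h => hf h]
  simp only [ent, Finsupp.mapDomain_apply hf]

lemma sum_mul_ent_le_ent_sum_smul {ι : Type*} {s : Finset ι} {w : ι → ℝ} {P : ι → α →₀ ℝ}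
    (hw : ∀ i ∈ s, 0 ≤ w i) (hw1 : ∑ i ∈ s, w i = 1) (hP : ∀ i ∈ s, ∀ x, 0 ≤ P i x) :
    ∑ i ∈ s, w i * ent (P i) ≤ ent (∑ i ∈ s, w i • P i) := by
  classical
  set T := s.biUnion fun i => (P i).support
  have hPT : ∀ i ∈ s, (P i).support ⊆ T := fun i hi =>
    subset_biUnion_of_mem (fun i => (P i).support) hi
  have hsumT : (∑ i ∈ s, w i • P i).support ⊆ T := Finsupp.support_finsetSum.trans <|
    biUnion_subset.2 fun i hi => Finsupp.support_smul.trans (hPT i hi)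
  calc ∑ i ∈ s, w i * ent (P i)
      = ∑ x ∈ T, ∑ i ∈ s, w i * Real.negMulLog (P i x) := by
        rw [sum_comm]
        exact sum_congr rfl fun i hi => by rw [ent_eq_sum_of_support_subset (hPT i hi), mul_sum]
    _ ≤ ∑ x ∈ T, Real.negMulLog (∑ i ∈ s, w i * P i x) :=
        sum_le_sum fun x _ => Real.concaveOn_negMulLog.le_map_sum hw hw1 fun i hi => hP i hi x
    _ = ent (∑ i ∈ s, w i • P i) := by
        rw [ent_eq_sum_of_support_subset hsumT]
        simp [Finsupp.finsetSum_apply]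

end Basics

section Products

variable {α β α' β' γ : Type*}

@[simp]
lemma prodPMF_apply (p : α →₀ ℝ) (q : β →₀ ℝ) (z : α × β) : prodPMF p q z = p z.1 * q z.2 := rfl

lemma support_prodPMF (p : α →₀ ℝ) (q : β →₀ ℝ) :
    (prodPMF p q).support = p.support ×ˢ q.support := by
  ext z
  simp

lemma mapDomain_prodMap_prodPMF (π₁ : α → α') (π₂ : β → β') (p : α →₀ ℝ) (q : β →₀ ℝ) :
    Finsupp.mapDomain (Prod.map π₁ π₂) (prodPMF p q)
      = prodPMF (Finsupp.mapDomain π₁ p) (Finsupp.mapDomain π₂ q) := by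
  classical
  ext ⟨y₁, y₂⟩
  rw [mapDomain_apply_eq_sum, prodPMF_apply, mapDomain_apply_eq_sum, mapDomain_apply_eq_sum,
    sum_mul_sum, ← sum_product', support_prodPMF, ← filter_product]
  simp [Prod.ext_iff]

lemma mapDomain_swap_prodPMF (p : α →₀ ℝ) (q : β →₀ ℝ) :
    Finsupp.mapDomain Prod.swap (prodPMF p q) = prodPMF q p := by
  ext ⟨b, a⟩
  rw [← Prod.swap_prod_mk, Finsupp.mapDomain_apply Prod.swap_injective]
  simp [mul_comm]

lemma mapDomain_prodPMF_eq_sum_smul (g : α × β → γ) (p : α →₀ ℝ) (q : β →₀ ℝ) :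
    Finsupp.mapDomain g (prodPMF p q)
      = ∑ b ∈ q.support, q b • Finsupp.mapDomain (fun a => g (a, b)) p := by
  classical
  ext x
  rw [mapDomain_apply_eq_sum, support_prodPMF, Finsupp.finsetSum_apply, sum_filter,
    sum_product_right]
  refine sum_congr rfl fun b _ => ?_
  rw [Finsupp.smul_apply, mapDomain_apply_eq_sum, smul_eq_mul, sum_filter, mul_sum]
  exact sum_congr rfl fun a _ => by split_ifs <;> simp [mul_comm]

lemma ent_le_ent_mapDomain_prodPMF_left {g : α × β → γ}
    (hg : ∀ b, Function.Injective fun a => g (a, b)) {p : α →₀ ℝ} {q : β →₀ ℝ}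
    (hp : ∀ x, 0 ≤ p x) (hq : IsPMF q) :
    ent p ≤ ent (Finsupp.mapDomain g (prodPMF p q)) := by
  rw [mapDomain_prodPMF_eq_sum_smul]
  calc ent p = ∑ b ∈ q.support, q b * ent (Finsupp.mapDomain (fun a => g (a, b)) p) := by
        simp only [ent_mapDomain_of_injective (hg _), ← sum_mul, hq.2, one_mul]
    _ ≤ _ := sum_mul_ent_le_ent_sum_smul (fun b _ => hq.1 b) hq.2
        fun _ _ => mapDomain_nonneg hp

lemma ent_le_ent_mapDomain_prodPMF_right {g : α × β → γ}
    (hg : ∀ a, Function.Injective fun b => g (a, b)) {p : α →₀ ℝ} {q : β →₀ ℝ}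
    (hp : IsPMF p) (hq : ∀ x, 0 ≤ q x) :
    ent q ≤ ent (Finsupp.mapDomain g (prodPMF p q)) := by
  rw [← mapDomain_swap_prodPMF q p, ← Finsupp.mapDomain_comp]
  exact ent_le_ent_mapDomain_prodPMF_left hg hq hp

end Products

section Fibers

variable {α β : Type*} [DecidableEq β]

lemma condFiber_eq_smul_filter (π : α → β) (y : β) (p : α →₀ ℝ) :
    condFiber π y p = (Finsupp.mapDomain π p y)⁻¹ • p.filter (π · = y) := by
  ext x
  simp only [condFiber, Finsupp.onFinset_apply, Finsupp.smul_apply, Finsupp.filter_apply,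
    smul_eq_mul]
  split_ifs <;> simp [div_eq_inv_mul]

lemma condFiber_apply_of_eq (π : α → β) {y : β} (p : α →₀ ℝ) {x : α} (hx : π x = y) :
    condFiber π y p x = p x / Finsupp.mapDomain π p y := by
  simp [condFiber, hx]

lemma condFiber_nonneg (π : α → β) (y : β) {p : α →₀ ℝ} (hp : ∀ x, 0 ≤ p x) (x : α) :
    0 ≤ condFiber π y p x := by
  rw [condFiber_eq_smul_filter, Finsupp.smul_apply, Finsupp.filter_apply, smul_eq_mul]
  split_ifs
  exacts [mul_nonneg (inv_nonneg.2 (mapDomain_nonneg hp y)) (hp x), by simp]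

lemma support_condFiber_subset (π : α → β) (y : β) (p : α →₀ ℝ) :
    (condFiber π y p).support ⊆ {x ∈ p.support | π x = y} := by
  rw [condFiber_eq_smul_filter]
  exact Finsupp.support_smul

lemma sum_condFiber_eq_one (π : α → β) {y : β} {p : α →₀ ℝ}
    (hy : Finsupp.mapDomain π p y ≠ 0) :
    ∑ x ∈ p.support with π x = y, condFiber π y p x = 1 := by
  rw [sum_congr rfl fun x hx => condFiber_apply_of_eq π p (mem_filter.1 hx).2, ← sum_div,
    ← mapDomain_apply_eq_sum, div_self hy]

lemma IsPMF.condFiber (π : α → β) {y : β} {p : α →₀ ℝ} (hp : ∀ x, 0 ≤ p x)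
    (hy : Finsupp.mapDomain π p y ≠ 0) : IsPMF (condFiber π y p) := by
  refine ⟨condFiber_nonneg π y hp, ?_⟩
  rw [← sum_condFiber_eq_one π hy]
  exact sum_subset (support_condFiber_subset π y p) fun x _ hx => Finsupp.notMem_support_iff.1 hx

lemma sum_negMulLog_fiber_eq (π : α → β) {y : β} {p : α →₀ ℝ}
    (hy : Finsupp.mapDomain π p y ≠ 0) :
    ∑ x ∈ p.support with π x = y, Real.negMulLog (p x)
      = Real.negMulLog (Finsupp.mapDomain π p y)
        + Finsupp.mapDomain π p y * ent (condFiber π y p) := by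
  set q := Finsupp.mapDomain π p
  have hp : ∀ x ∈ p.support.filter (π · = y), p x = q y * condFiber π y p x := fun x hx => by
    rw [condFiber_apply_of_eq π p (mem_filter.1 hx).2, mul_div_cancel₀ _ hy]
  rw [sum_congr rfl fun x hx => by rw [hp x hx, Real.negMulLog_mul], sum_add_distrib, ← sum_mul,
    sum_condFiber_eq_one π hy, one_mul, ← mul_sum,
    ← ent_eq_sum_of_support_subset (support_condFiber_subset π y p)]

/-- The chain rule `H(X) = H(π X) + H(X | π X)`. -/
lemma ent_eq_ent_mapDomain_add_sum (π : α → β) {p : α →₀ ℝ} (hp : ∀ x, 0 ≤ p x) :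
    ent p = ent (Finsupp.mapDomain π p) + ∑ y ∈ (Finsupp.mapDomain π p).support,
      Finsupp.mapDomain π p y * ent (condFiber π y p) := by
  rw [ent, ← sum_fiberwise_of_maps_to fun x => mem_support_mapDomain_of_nonneg π hp, ent,
    ← sum_add_distrib]
  exact sum_congr rfl fun y hy => sum_negMulLog_fiber_eq π (Finsupp.mem_support_iff.1 hy)

end Fibers

section Conditioning

variable {α β γ δ : Type*}

lemma mapDomain_filter_comp (g : α → γ) (P : γ → Prop) [DecidablePred P] (w : α →₀ ℝ) :
    Finsupp.mapDomain g (w.filter fun a => P (g a)) = (Finsupp.mapDomain g w).filter P := by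
  classical
  ext x
  rw [mapDomain_apply_eq_sum_of_support_subset g (s := w.support) (filter_subset _ _),
    Finsupp.filter_apply, mapDomain_apply_eq_sum]
  split_ifs with hx
  · exact sum_congr rfl fun a ha => Finsupp.filter_apply_pos _ _ ((mem_filter.1 ha).2 ▸ hx)
  · exact sum_eq_zero fun a ha => Finsupp.filter_apply_neg _ _ ((mem_filter.1 ha).2 ▸ hx)

variable [DecidableEq β] [DecidableEq δ]

lemma condFiber_mapDomain (π : γ → δ) (g : α → γ) (t : δ) (w : α →₀ ℝ) :
    condFiber π t (Finsupp.mapDomain g w) = Finsupp.mapDomain g (condFiber (π ∘ g) t w) := by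
  rw [condFiber_eq_smul_filter, condFiber_eq_smul_filter, Finsupp.mapDomain_smul,
    ← Finsupp.mapDomain_comp]
  exact congrArg _ (mapDomain_filter_comp g (π · = t) w).symm

lemma filter_comp_eq_sum_filter (ρ : α → β) (κ : β → δ) {w : α →₀ ℝ} (hw : ∀ x, 0 ≤ w x)
    (d : δ) :
    w.filter (fun a => κ (ρ a) = d)
      = ∑ b ∈ (Finsupp.mapDomain ρ w).support with κ b = d, w.filter (ρ · = b) := by
  ext x
  simp only [Finsupp.finsetSum_apply, Finsupp.filter_apply]
  by_cases hx : w x = 0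
  · simp [hx]
  · have := mem_support_mapDomain_of_nonneg ρ hw (Finsupp.mem_support_iff.2 hx)
    simp [this]

lemma condFiber_comp_eq_sum_smul (ρ : α → β) (κ : β → δ) {w : α →₀ ℝ} (hw : ∀ x, 0 ≤ w x)
    (d : δ) :
    condFiber (κ ∘ ρ) d w
      = ∑ b ∈ (Finsupp.mapDomain ρ w).support with κ b = d,
          (Finsupp.mapDomain ρ w b / Finsupp.mapDomain κ (Finsupp.mapDomain ρ w) d) •
            condFiber ρ b w := by
  rw [condFiber_eq_smul_filter, Finsupp.mapDomain_comp, Function.comp_def, filter_comp_eq_sum_filter ρ κ hw d, smul_sum]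
  refine sum_congr rfl fun b hb => ?_
  have hb : Finsupp.mapDomain ρ w b ≠ 0 := Finsupp.mem_support_iff.1 (mem_filter.1 hb).1
  rw [condFiber_eq_smul_filter, smul_smul]
  congr 1
  field_simp

/-- Conditioning on finer information lowers entropy: `H(g X | ρ X) ≤ H(g X | κ (ρ X))`. -/
lemma sum_mul_ent_condFiber_le_of_comp (g : α → γ) (ρ : α → β) (κ : β → δ) {w : α →₀ ℝ}
    (hw : ∀ x, 0 ≤ w x) :
    ∑ b ∈ (Finsupp.mapDomain ρ w).support,
        Finsupp.mapDomain ρ w b * ent (Finsupp.mapDomain g (condFiber ρ b w))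
      ≤ ∑ d ∈ (Finsupp.mapDomain κ (Finsupp.mapDomain ρ w)).support,
        Finsupp.mapDomain κ (Finsupp.mapDomain ρ w) d
          * ent (Finsupp.mapDomain g (condFiber (κ ∘ ρ) d w)) := by
  set q := Finsupp.mapDomain ρ w
  have hq : ∀ b, 0 ≤ q b := mapDomain_nonneg hw
  rw [← sum_fiberwise_of_maps_to fun b => mem_support_mapDomain_of_nonneg κ hq]
  refine sum_le_sum fun d hd => ?_
  set R := Finsupp.mapDomain κ q d
  have hR : 0 < R := (mapDomain_nonneg hq d).lt_of_ne' (Finsupp.mem_support_iff.1 hd)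
  rw [condFiber_comp_eq_sum_smul ρ κ hw, Finsupp.mapDomain_finsetSum]
  simp only [Finsupp.mapDomain_smul]
  calc ∑ b ∈ q.support with κ b = d, q b * ent (Finsupp.mapDomain g (condFiber ρ b w))
      = R * ∑ b ∈ q.support with κ b = d,
          q b / R * ent (Finsupp.mapDomain g (condFiber ρ b w)) := by
        rw [mul_sum]
        exact sum_congr rfl fun b _ => by field_simp
    _ ≤ _ := by
        refine mul_le_mul_of_nonneg_left (sum_mul_ent_le_ent_sum_smul
          (fun b _ => div_nonneg (hq b) hR.le) ?_
          fun b _ => mapDomain_nonneg (condFiber_nonneg ρ b hw)) hR.le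
        rw [← sum_div, ← mapDomain_apply_eq_sum, div_self hR.ne']

lemma ent_mapDomain_add_sum_le_of_comp {g : α → γ} {ρ : α → β} {κ : β → δ} {π : γ → δ}
    (hπ : ∀ a, π (g a) = κ (ρ a)) {w : α →₀ ℝ} (hw : ∀ x, 0 ≤ w x) :
    ent (Finsupp.mapDomain κ (Finsupp.mapDomain ρ w))
        + ∑ b ∈ (Finsupp.mapDomain ρ w).support,
          Finsupp.mapDomain ρ w b * ent (Finsupp.mapDomain g (condFiber ρ b w))
      ≤ ent (Finsupp.mapDomain g w) := by
  have hcomp : π ∘ g = κ ∘ ρ := funext hπ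
  have hchain := ent_eq_ent_mapDomain_add_sum π (mapDomain_nonneg (f := g) hw)
  simp only [condFiber_mapDomain, ← Finsupp.mapDomain_comp, hcomp] at hchain
  rw [hchain, Finsupp.mapDomain_comp]
  gcongr
  exact sum_mul_ent_condFiber_le_of_comp g ρ κ hw

end Conditioning

section IndependentPairs

variable {α β α' β' γ δ : Type*} [DecidableEq α'] [DecidableEq β']

lemma condFiber_prodMap_prodPMF (π₁ : α → α') (π₂ : β → β') (y₁ : α') (y₂ : β')
    (p₁ : α →₀ ℝ) (p₂ : β →₀ ℝ) :
    condFiber (Prod.map π₁ π₂) (y₁, y₂) (prodPMF p₁ p₂)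
      = prodPMF (condFiber π₁ y₁ p₁) (condFiber π₂ y₂ p₂) := by
  ext ⟨a, b⟩
  simp only [condFiber_eq_smul_filter, mapDomain_prodMap_prodPMF, Finsupp.smul_apply,
    Finsupp.filter_apply, prodPMF_apply, Prod.map_apply, Prod.mk.injEq, smul_eq_mul, mul_inv]
  split_ifs <;> simp_all
  ring

lemma ent_mapDomain_prodPMF_add_sum_le {π₁ : α → α'} {π₂ : β → β'} {g : α × β → γ}
    {κ : α' × β' → δ} {π : γ → δ} (hπ : ∀ a b, π (g (a, b)) = κ (π₁ a, π₂ b))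
    {p₁ : α →₀ ℝ} {p₂ : β →₀ ℝ} (hp₁ : ∀ x, 0 ≤ p₁ x) (hp₂ : ∀ x, 0 ≤ p₂ x) :
    ent (Finsupp.mapDomain κ (prodPMF (Finsupp.mapDomain π₁ p₁) (Finsupp.mapDomain π₂ p₂)))
        + ∑ y₁ ∈ (Finsupp.mapDomain π₁ p₁).support, ∑ y₂ ∈ (Finsupp.mapDomain π₂ p₂).support,
          Finsupp.mapDomain π₁ p₁ y₁ * Finsupp.mapDomain π₂ p₂ y₂
            * ent (Finsupp.mapDomain g (prodPMF (condFiber π₁ y₁ p₁) (condFiber π₂ y₂ p₂)))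
      ≤ ent (Finsupp.mapDomain g (prodPMF p₁ p₂)) := by
  classical
  have h := ent_mapDomain_add_sum_le_of_comp (g := g) (ρ := Prod.map π₁ π₂)
    (fun z => hπ z.1 z.2) (w := prodPMF p₁ p₂) fun z => mul_nonneg (hp₁ z.1) (hp₂ z.2)
  rw [mapDomain_prodMap_prodPMF, support_prodPMF, sum_product] at h
  simpa only [prodPMF_apply, condFiber_prodMap_prodPMF] using h

end IndependentPairs

lemma sum_sum_mul_mul_left_of_sum_eq_one {ι κ : Type*} {s : Finset ι} {t : Finset κ}
    (u a : ι → ℝ) {v : κ → ℝ} (hv : ∑ j ∈ t, v j = 1) :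
    ∑ i ∈ s, ∑ j ∈ t, u i * v j * a i = ∑ i ∈ s, u i * a i :=
  sum_congr rfl fun i _ => by rw [← sum_mul, ← mul_sum, hv, mul_one]

lemma sum_sum_mul_mul_right_of_sum_eq_one {ι κ : Type*} {s : Finset ι} {t : Finset κ}
    {u : ι → ℝ} (hu : ∑ i ∈ s, u i = 1) (v b : κ → ℝ) :
    ∑ i ∈ s, ∑ j ∈ t, u i * v j * b j = ∑ j ∈ t, v j * b j := by
  rw [sum_comm]
  exact sum_congr rfl fun j _ => by rw [← sum_mul, ← sum_mul, hu, one_mul]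

section Ruzsa

variable {G H : Type*} [AddCommGroup G] [AddCommGroup H] [DecidableEq H]

lemma dEnt_nonneg {p q : G →₀ ℝ} (hp : IsPMF p) (hq : IsPMF q) : 0 ≤ dEnt p q := by
  have h₁ : ent p ≤ ent (subDist p q) :=
    ent_le_ent_mapDomain_prodPMF_left (fun b => sub_left_injective (b := b)) hp.1 hq
  have h₂ : ent q ≤ ent (subDist p q) :=
    ent_le_ent_mapDomain_prodPMF_right (fun a => sub_right_injective (b := a)) hp hq.1
  rw [dEnt]
  linarith

lemma dEnt_mapDomain_add_sum_le (π : G →+ H) {p₁ p₂ : G →₀ ℝ} (h₁ : IsPMF p₁)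
    (h₂ : IsPMF p₂) :
    dEnt (Finsupp.mapDomain π p₁) (Finsupp.mapDomain π p₂) +
      ∑ y₁ ∈ (Finsupp.mapDomain π p₁).support, ∑ y₂ ∈ (Finsupp.mapDomain π p₂).support,
        Finsupp.mapDomain π p₁ y₁ * Finsupp.mapDomain π p₂ y₂ *
          dEnt (condFiber π y₁ p₁) (condFiber π y₂ p₂)
      ≤ dEnt p₁ p₂ := by
  have key := ent_mapDomain_prodPMF_add_sum_le (g := fun z : G × G => z.1 - z.2)
    (κ := fun z : H × H => z.1 - z.2) (fun a b => map_sub π a b) h₁.1 h₂.1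
  have chain₁ := ent_eq_ent_mapDomain_add_sum π h₁.1
  have chain₂ := ent_eq_ent_mapDomain_add_sum π h₂.1
  simp only [dEnt, subDist, mul_sub, sum_sub_distrib,
    sum_sum_mul_mul_left_of_sum_eq_one _ _ (h₂.mapDomain π).2,
    sum_sum_mul_mul_right_of_sum_eq_one (h₁.mapDomain π).2]
  simp only [mul_div_assoc', ← sum_div]
  linarith

lemma sigmaEnt_mapDomain_le (π : G →+ H) {p : G →₀ ℝ} (hp : IsPMF p) :
    sigmaEnt (Finsupp.mapDomain π p) ≤ sigmaEnt p := by
  set q := Finsupp.mapDomain π p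
  have key := ent_mapDomain_prodPMF_add_sum_le (g := fun z : G × G => z.1 + z.2)
    (κ := fun z : H × H => z.1 + z.2) (fun a b => map_add π a b) hp.1 hp.1
  have chain := ent_eq_ent_mapDomain_add_sum π hp.1
  have hcond : ∑ y ∈ q.support, q y * ent (condFiber π y p)
      ≤ ∑ y₁ ∈ q.support, ∑ y₂ ∈ q.support,
          q y₁ * q y₂ * ent (sumDist (condFiber π y₁ p) (condFiber π y₂ p)) := by
    rw [← sum_sum_mul_mul_left_of_sum_eq_one _ _ (hp.mapDomain π).2]
    refine sum_le_sum fun y₁ _ => sum_le_sum fun y₂ hy₂ => ?_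
    refine mul_le_mul_of_nonneg_left ?_ (mul_nonneg ((hp.mapDomain π).1 y₁) ((hp.mapDomain π).1 y₂))
    exact ent_le_ent_mapDomain_prodPMF_left (fun b => add_left_injective b)
      (condFiber_nonneg π y₁ hp.1) (IsPMF.condFiber π hp.1 (Finsupp.mem_support_iff.1 hy₂))
  rw [sigmaEnt, sigmaEnt, Real.exp_le_exp]
  simp only [sumDist] at hcond ⊢
  linarith

end Ruzsa

/-- Let `π : G → H` be a homomorphism of abelian groups, let `X₁ ~ p₁`,
`X₂ ~ p₂` be random variables taking values in finite subsets of `G`, and let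
`Y₁ = π(X₁)`, `Y₂ = π(X₂)`. Then
`d_ent(X₁, X₂) ≥ d_ent(Y₁, Y₂) + Σ_{y₁,y₂} P(Y₁=y₁) P(Y₂=y₂) d_ent((X₁|Y₁=y₁), (X₂|Y₂=y₂))`;
in particular `d_ent(X₁, X₂) ≥ d_ent(Y₁, Y₂)`, and `σ_ent[π(X)] ≤ σ_ent[X]` for every `X`. -/
theorem statement5 {G H : Type*} [AddCommGroup G] [AddCommGroup H] [DecidableEq H]
    (π : G →+ H) (p₁ p₂ : G →₀ ℝ) (h₁ : IsPMF p₁) (h₂ : IsPMF p₂) :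
    (dEnt (Finsupp.mapDomain π p₁) (Finsupp.mapDomain π p₂) +
      ∑ y₁ ∈ (Finsupp.mapDomain π p₁).support, ∑ y₂ ∈ (Finsupp.mapDomain π p₂).support,
        (Finsupp.mapDomain π p₁) y₁ * (Finsupp.mapDomain π p₂) y₂ *
          dEnt (condFiber π y₁ p₁) (condFiber π y₂ p₂)
      ≤ dEnt p₁ p₂) ∧
    dEnt (Finsupp.mapDomain π p₁) (Finsupp.mapDomain π p₂) ≤ dEnt p₁ p₂ ∧
    (∀ p : G →₀ ℝ, IsPMF p → sigmaEnt (Finsupp.mapDomain π p) ≤ sigmaEnt p) := by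
  have hdist := dEnt_mapDomain_add_sum_le π h₁ h₂
  refine ⟨hdist, (le_add_of_nonneg_right ?_).trans hdist, fun p hp => sigmaEnt_mapDomain_le π hp⟩
  refine sum_nonneg fun y₁ hy₁ => sum_nonneg fun y₂ hy₂ => mul_nonneg ?_ ?_
  · exact mul_nonneg ((h₁.mapDomain π).1 y₁) ((h₂.mapDomain π).1 y₂)
  · exact dEnt_nonneg (IsPMF.condFiber π h₁.1 (Finsupp.mem_support_iff.1 hy₁))
      (IsPMF.condFiber π h₂.1 (Finsupp.mem_support_iff.1 hy₂))

end
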